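/- For every n ≥ 1, the generalized quaternion group Q(n) is a leaf on the descendant tree of 2-groups: there is no finite 2-group D whose lower exponent-2 central series satisfies D_{n+2} = {e}, D_{n+1} ≠ {e}, and D/D_{n+1} ≅ Q(n). -/

import Mathlib

/-!
Suppose `D_{n+2} = 1` and `φ : D ↠ Q(n)` has kernel `K = D_{n+1}`; then `K` consists of central
involutions. Let `x` lift `a 1` and put `t = x^{2^n}`. Every element of `Q(n)` conjugates `a 1`
to `a 1` or its inverse, so every element of `D` conjugates `x` to `x^{±1}` up to a factor in
`K`, and that factor dies in the even power `t`: `t` is conjugated to `t^{±1}`. A lift `b` of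
`xa 0` inverts `t`, yet centralizes it because `b² ∈ tK`; hence `t` is a central involution.
Finally `Q(n)_n ≤ ⟨(a 1)^{2^n}⟩`, so `D_n ≤ ⟨t⟩K` consists of central involutions, which
forces `D_{n+1} = 1`.
-/

/-- The lower exponent-`p` central series of a group: `G₀ = G` and
`G_{j+1} = G_j^p [G_j, G]`, the subgroup generated by `p`-th powers of elements of `G_j`
together with commutators of elements of `G_j` with elements of `G`. -/
def lowerExpPSeries (p : ℕ) (G : Type*) [Group G] : ℕ → Subgroup G
  | 0 => ⊤
  | j + 1 => Subgroup.closure {x : G | ∃ g ∈ lowerExpPSeries p G j, x = g ^ p} ⊔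
      ⁅lowerExpPSeries p G j, (⊤ : Subgroup G)⁆

open Subgroup QuaternionGroup
open scoped commutatorElement

/-- `Ω₁(Z(G))` when `p` is prime. -/
def omegaCenter (p : ℕ) (G : Type*) [Group G] : Subgroup G where
  carrier := {g | g ∈ center G ∧ g ^ p = 1}
  mul_mem' := fun {g h} ⟨hg, hgp⟩ ⟨hh, hhp⟩ =>
    ⟨mul_mem hg hh, by rw [Commute.mul_pow (mem_center_iff.mp hg h).symm, hgp, hhp, one_mul]⟩
  one_mem' := ⟨one_mem _, one_pow p⟩
  inv_mem' := fun ⟨hg, hgp⟩ => ⟨inv_mem hg, by rw [inv_pow, hgp, inv_one]⟩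

section LowerExpPSeries

variable {p : ℕ} {G : Type*} [Group G]

theorem lowerExpPSeries_succ_eq_bot_iff {j : ℕ} :
    lowerExpPSeries p G (j + 1) = ⊥ ↔ lowerExpPSeries p G j ≤ omegaCenter p G := by
  rw [lowerExpPSeries, eq_bot_iff, sup_le_iff, closure_le, commutator_le]
  constructor
  · rintro ⟨hpow, hcomm⟩ g hg
    refine ⟨mem_center_iff.mpr fun h => ?_, mem_bot.mp (hpow ⟨g, hg, rfl⟩)⟩
    exact (commutatorElement_eq_one_iff_mul_comm.mp
      (mem_bot.mp (hcomm g hg h (mem_top h)))).symm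
  · intro h
    refine ⟨?_, fun g hg k _ => mem_bot.mpr ?_⟩
    · rintro _ ⟨g, hg, rfl⟩
      exact mem_bot.mpr (h hg).2
    · exact commutatorElement_eq_one_iff_mul_comm.mpr (mem_center_iff.mp (h hg).1 k).symm

theorem map_lowerExpPSeries_le {H : Type*} [Group H] (φ : G →* H) :
    ∀ j, map φ (lowerExpPSeries p G j) ≤ lowerExpPSeries p H j
  | 0 => le_top
  | j + 1 => by
    rw [lowerExpPSeries, lowerExpPSeries, Subgroup.map_sup, map_commutator,
      MonoidHom.map_closure]
    refine sup_le_sup (closure_mono ?_) (commutator_mono (map_lowerExpPSeries_le φ j) le_top)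
    rintro _ ⟨_, ⟨g, hg, rfl⟩, rfl⟩
    exact ⟨φ g, map_lowerExpPSeries_le φ j ⟨g, hg, rfl⟩, map_pow φ g p⟩

theorem lowerExpPSeries_two_one_le {H : Subgroup G} (hsq : ∀ g : G, g ^ 2 ∈ H) :
    lowerExpPSeries 2 G 1 ≤ H := by
  rw [lowerExpPSeries, sup_le_iff, closure_le, commutator_le]
  refine ⟨fun _ ⟨g, _, hx⟩ => hx ▸ hsq g, fun g _ h _ => ?_⟩
  have hsplit : ⁅g, h⁆ = (g * h) ^ 2 * ((h⁻¹ * g * h) ^ 2)⁻¹ * (h ^ 2)⁻¹ := by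
    simp only [commutatorElement_def, sq]; group
  rw [hsplit]
  exact mul_mem (mul_mem (hsq _) (inv_mem (hsq _))) (inv_mem (hsq _))

theorem commutatorElement_mem_zpowers_sq {g h : G}
    (hconj : g * h * g⁻¹ = h ∨ g * h * g⁻¹ = h⁻¹) :
    ⁅h, g⁆ ∈ zpowers (h ^ 2) := by
  have hcomm : ⁅h, g⁆ = h * (g * h * g⁻¹)⁻¹ := by rw [commutatorElement_def]; group
  rcases hconj with hconj | hconj <;> rw [hcomm, hconj]
  · rw [mul_inv_cancel]; exact one_mem _
  · rw [inv_inv, ← sq]; exact mem_zpowers _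

theorem lowerExpPSeries_two_le_zpowers {x : G}
    (hx : ∀ g : G, g * x * g⁻¹ = x ∨ g * x * g⁻¹ = x⁻¹) (hsq : ∀ g : G, g ^ 2 ∈ zpowers (x ^ 2))
    (j : ℕ) : lowerExpPSeries 2 G (j + 1) ≤ zpowers (x ^ 2 ^ (j + 1)) := by
  induction j with
  | zero => simpa using lowerExpPSeries_two_one_le hsq
  | succ j ih =>
    have hsq' : ∀ h ∈ lowerExpPSeries 2 G (j + 1), h ^ 2 ∈ zpowers (x ^ 2 ^ (j + 2)) := by
      intro h hh
      obtain ⟨k, rfl⟩ := mem_zpowers_iff.mp (ih hh)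
      refine mem_zpowers_iff.mpr ⟨k, ?_⟩
      rw [← zpow_natCast, ← zpow_natCast, ← zpow_natCast, ← zpow_mul, ← zpow_mul, ← zpow_mul]
      push_cast; ring_nf
    rw [lowerExpPSeries, sup_le_iff, closure_le, commutator_le]
    refine ⟨fun _ ⟨h, hh, hy⟩ => hy ▸ hsq' h hh, fun h hh g _ => ?_⟩
    refine zpowers_le.mpr (hsq' h hh) (commutatorElement_mem_zpowers_sq ?_)
    obtain ⟨k, rfl⟩ := mem_zpowers_iff.mp (ih hh)
    rw [← conj_zpow, ← conj_pow, ← inv_zpow, ← inv_pow]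
    rcases hx g with hg | hg <;> rw [hg] <;> simp

end LowerExpPSeries

namespace QuaternionGroup

variable {m : ℕ}

theorem a_one_zpow (k : ℤ) : (a 1 : QuaternionGroup m) ^ k = a k := by
  cases k with
  | ofNat k => simp [a_one_pow]
  | negSucc k => rw [zpow_negSucc, a_one_pow, Int.negSucc_eq]; push_cast; rfl

theorem xa_mul_a_one_mul_inv (i : ZMod (2 * m)) : xa i * a 1 * (xa i)⁻¹ = (a 1)⁻¹ := by
  show xa i * a 1 * xa ((m : ZMod (2 * m)) + i) = a (-1)
  rw [xa_mul_a, xa_mul_xa]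
  have h2m := ZMod.natCast_self (2 * m)
  push_cast at h2m
  congr 1
  linear_combination h2m

theorem conj_a_one (g : QuaternionGroup m) :
    g * a 1 * g⁻¹ = a 1 ∨ g * a 1 * g⁻¹ = (a 1)⁻¹ := by
  cases g with
  | a i => left; rw [a_mul_a, add_comm, ← a_mul_a, mul_inv_cancel_right]
  | xa i => exact .inr (xa_mul_a_one_mul_inv i)

theorem sq_mem_zpowers_a_one_sq (hm : Even m) (g : QuaternionGroup m) :
    g ^ 2 ∈ zpowers ((a 1) ^ 2) := by
  cases g with
  | a i =>
    obtain ⟨k, rfl⟩ := ZMod.intCast_surjective i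
    refine mem_zpowers_iff.mpr ⟨k, ?_⟩
    rw [← a_one_zpow, ← zpow_natCast, ← zpow_natCast, ← zpow_mul, ← zpow_mul, mul_comm k]
  | xa i =>
    obtain ⟨k, rfl⟩ := hm
    rw [xa_sq, ← a_one_pow, ← two_mul, pow_mul]
    exact npow_mem_zpowers _ _

end QuaternionGroup

section Lifting

variable {D : Type*} [Group D]

theorem pow_eq_pow_of_inv_mul_mem_omegaCenter {p m : ℕ} (hpm : p ∣ m) {x y : D}
    (h : x⁻¹ * y ∈ omegaCenter p D) : y ^ m = x ^ m := by
  obtain ⟨hc, hp⟩ := h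
  obtain ⟨k, rfl⟩ := hpm
  rw [← mul_inv_cancel_left x y, Commute.mul_pow (mem_center_iff.mp hc x), pow_mul (x⁻¹ * y),
    hp, one_pow, mul_one]

theorem pow_mem_omegaCenter_of_map_eq_a_one {m : ℕ} (hm : Even m) {φ : D →* QuaternionGroup m}
    (hφ : Function.Surjective φ) (hker : φ.ker ≤ omegaCenter 2 D) {x : D} (hx : φ x = a 1) :
    x ^ m ∈ omegaCenter 2 D := by
  have lift_pow : ∀ {y z : D}, φ y = φ z → y ^ m = z ^ m := fun h =>
    pow_eq_pow_of_inv_mul_mem_omegaCenter (even_iff_two_dvd.mp hm)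
      (hker (by rw [MonoidHom.mem_ker, map_mul, map_inv, h, inv_mul_cancel]))
  have hconj : ∀ d : D, d * x ^ m * d⁻¹ = x ^ m ∨ d * x ^ m * d⁻¹ = (x ^ m)⁻¹ := by
    intro d
    rw [← conj_pow, ← inv_pow]
    rcases conj_a_one (φ d) with h | h
    · exact .inl (lift_pow (by rw [map_mul, map_mul, map_inv, hx, h]))
    · exact .inr (lift_pow (by rw [map_mul, map_mul, map_inv, map_inv, hx, h]))
  obtain ⟨b, hb⟩ := hφ (xa 0)
  have hb_inv : b * x ^ m * b⁻¹ = (x ^ m)⁻¹ := by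
    rw [← conj_pow, ← inv_pow]
    exact lift_pow (by rw [map_mul, map_mul, map_inv, map_inv, hx, hb, xa_mul_a_one_mul_inv])
  -- `b²` and `x^m` both map to `a m`, so they differ by a central element
  have hb_comm : b * x ^ m * b⁻¹ = x ^ m := by
    have hw := (hker (x := (b ^ 2)⁻¹ * x ^ m) (by
      rw [MonoidHom.mem_ker, map_mul, map_inv, map_pow, map_pow, hb, hx, xa_sq, a_one_pow,
        inv_mul_cancel])).1
    have hcomm : Commute b (x ^ m) := by
      rw [← mul_inv_cancel_left (b ^ 2) (x ^ m)]
      exact (Commute.self_pow b 2).mul_right (mem_center_iff.mp hw b)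
    rw [hcomm.eq, mul_inv_cancel_right]
  have hinv : x ^ m = (x ^ m)⁻¹ := hb_comm.symm.trans hb_inv
  refine ⟨mem_center_iff.mpr fun d => ?_, ?_⟩
  · rcases hconj d with h | h
    · exact mul_inv_eq_iff_eq_mul.mp h
    · exact mul_inv_eq_iff_eq_mul.mp (h.trans hinv.symm)
  · rw [sq]
    exact mul_eq_one_iff_eq_inv.mpr hinv

end Lifting

/-- For every `n ≥ 1`, the generalized quaternion group `Q(n)`
(`QuaternionGroup (2^n)` in Mathlib) is a leaf on the descendant tree of `2`-groups: there is no
finite `2`-group `D` of `2`-class `n+2` with `D/D_{n+1} ≅ Q(n)`, where `D_j` denotes the lower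
exponent-`2` central series (the quotient `D/D_{n+1}` is encoded by a surjective homomorphism
with kernel `D_{n+1}`). -/
theorem quaternion_is_leaf (n : ℕ) (hn : 1 ≤ n) :
    ∀ (D : Type) [Group D] [Finite D], IsPGroup 2 D →
      lowerExpPSeries 2 D (n + 2) = ⊥ →
      lowerExpPSeries 2 D (n + 1) ≠ ⊥ →
      ∀ φ : D →* QuaternionGroup (2 ^ n),
        Function.Surjective φ → φ.ker ≠ lowerExpPSeries 2 D (n + 1) := by
  intro D _ _ _ hbot hne φ hφ hker
  have hm : Even (2 ^ n) := (Nat.even_pow' (by omega)).mpr even_two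
  have hK : φ.ker ≤ omegaCenter 2 D := hker ▸ lowerExpPSeries_succ_eq_bot_iff.mp hbot
  obtain ⟨x, hx⟩ := hφ (a 1)
  have ht : x ^ 2 ^ n ∈ omegaCenter 2 D := pow_mem_omegaCenter_of_map_eq_a_one hm hφ hK hx
  obtain ⟨k, rfl⟩ : ∃ k, n = k + 1 := ⟨n - 1, by omega⟩
  have hmap : map φ (lowerExpPSeries 2 D (k + 1)) ≤ map φ (zpowers (x ^ 2 ^ (k + 1))) := by
    rw [MonoidHom.map_zpowers, map_pow, hx]
    exact (map_lowerExpPSeries_le φ (k + 1)).trans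
      (lowerExpPSeries_two_le_zpowers conj_a_one (sq_mem_zpowers_a_one_sq hm) k)
  refine hne (lowerExpPSeries_succ_eq_bot_iff.mpr ?_)
  calc lowerExpPSeries 2 D (k + 1)
      ≤ zpowers (x ^ 2 ^ (k + 1)) ⊔ φ.ker := by
        rw [← comap_map_eq]; exact map_le_iff_le_comap.mp hmap
    _ ≤ omegaCenter 2 D := sup_le (zpowers_le.mpr ht) hK
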